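/- arXiv:1812.06556 — 5 statements merged into one kernel-verified Lean document; each statement's English description precedes it below -/
import Mathlib

section
/- Let $M$ be an $r \times r$ nonnegative integer matrix with largest positive real eigenvalue $d$ which is a simple root of the characteristic polynomial $\chi$, and suppose all eigenvalues $\lambda$ satisfy $|\lambda| \le d$. Let $Q(z) = \chi(z)/(z-d)$, and suppose $Q(d) \ge N$ for some real $N > 0$. Let $s$ be the number of non-real eigenvalues of $M$ with positive imaginary part (with multiplicity). Then $d \ge N^{1/(r-1)} \left(1 - \frac{s+1}{r}\right)^{1 - \frac{s}{r-1}}$. -/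
/-!
Let `R` be the roots of `Q`; it is invariant under conjugation because `M` is real, and
`|Q(d)| = ∏_{z ∈ R} |d - z|`. A real root contributes `d - Re z`, a conjugate pair contributes
`|d - z|² ≤ d · 2 (d - Re z)` since `|z| ≤ d`. Hence `N ≤ d^s ∏ g` for `r - 1 - s` nonnegative
numbers `g` with `∑ g = ∑_{z ∈ R} (d - Re z) = r d - tr M ≤ r d`, and AM-GM gives
`N ≤ d^s (r d / (r - 1 - s))^(r - 1 - s)`, which rearranges to the claim.
-/

open Polynomial ComplexConjugate

namespace Multiset

theorem prod_le_sum_div_card_pow {s : Multiset ℝ} (hs : ∀ x ∈ s, 0 ≤ x) :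
    s.prod ≤ (s.sum / card s) ^ card s := by
  rcases eq_or_ne s 0 with rfl | hne
  · simp
  have hn : (0 : ℝ) < card s := by exact_mod_cast card_pos.mpr hne
  have amgm := Real.geom_mean_le_arith_mean Finset.univ (fun _ : s => 1) (fun x => (x : ℝ))
    (fun _ _ => zero_le_one) (by simpa using hn) (fun _ _ => hs _ coe_mem)
  simp only [Real.rpow_one, Finset.sum_const, Finset.card_univ, card_coe, nsmul_eq_mul, mul_one,
    one_mul, ← prod_eq_prod_coe, ← sum_eq_sum_coe] at amgm
  rwa [Real.rpow_inv_le_iff_of_pos (prod_nonneg hs) (div_nonneg (sum_nonneg hs) hn.le) hn,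
    Real.rpow_natCast] at amgm

variable {R : Multiset ℂ}

theorem filter_im_eq_zero_add_filter_im_pos_add_map_conj (hR : R.map conj = R) :
    R.filter (·.im = 0) + R.filter (0 < ·.im) + (R.filter (0 < ·.im)).map conj = R := by
  have hneg : (R.filter (0 < ·.im)).map conj = R.filter (·.im < 0) := by
    conv_rhs => rw [← hR]
    rw [filter_map]
    exact congrArg _ (filter_congr fun z _ => by simp)
  ext z
  simp only [hneg, count_add, count_filter]
  rcases lt_trichotomy z.im 0 with h | h | h
  · simp [h, h.ne, not_lt.mpr h.le]
  · simp [h]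
  · simp [h, h.ne', not_lt.mpr h.le]

end Multiset

namespace Complex

theorem norm_ofReal_sub_of_im_eq_zero {d : ℝ} {z : ℂ} (hz : z.im = 0) (hzd : z.re ≤ d) :
    ‖(d : ℂ) - z‖ = d - z.re := by
  rw [← re_add_im z, hz, ofReal_zero, zero_mul, add_zero, ← ofReal_sub, norm_real,
    Real.norm_of_nonneg (sub_nonneg.mpr hzd), ofReal_re]

theorem norm_ofReal_sub_sq_le {d : ℝ} {z : ℂ} (hz : ‖z‖ ≤ d) :
    ‖(d : ℂ) - z‖ ^ 2 ≤ d * (2 * (d - z.re)) := by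
  have hz2 : z.re * z.re + z.im * z.im ≤ d ^ 2 := by
    rw [← normSq_apply, ← Complex.sq_norm]
    exact pow_le_pow_left₀ (norm_nonneg z) hz 2
  rw [Complex.sq_norm, normSq_apply]
  simp only [sub_re, sub_im, ofReal_re, ofReal_im]
  nlinarith

end Complex

namespace Multiset

/-- One entry `d - re z` for each real `z ∈ R` and one entry `2 (d - re z)` for each conjugate
pair `{z, conj z}` of non-real elements of `R`. -/
noncomputable def pairedGaps (d : ℝ) (R : Multiset ℂ) : Multiset ℝ :=
  (R.filter (·.im = 0)).map (fun z => d - z.re) +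
    (R.filter (0 < ·.im)).map (fun z => 2 * (d - z.re))

variable {d : ℝ} {R : Multiset ℂ}

theorem sum_pairedGaps (hR : R.map conj = R) :
    (pairedGaps d R).sum = (R.map fun z => d - z.re).sum := by
  have hconj : (fun z : ℂ => d - z.re) ∘ conj = fun z => d - z.re := funext fun z => by simp
  conv_rhs => rw [← filter_im_eq_zero_add_filter_im_pos_add_map_conj hR]
  rw [map_add, map_add, map_map, hconj, pairedGaps, sum_add, sum_add, sum_add, sum_map_mul_left]
  ring

theorem card_pairedGaps (hR : R.map conj = R) :
    card (pairedGaps d R) = card R - card (R.filter (0 < ·.im)) := by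
  have hcard := congrArg card (filter_im_eq_zero_add_filter_im_pos_add_map_conj hR)
  simp only [card_add, card_map] at hcard
  simp only [pairedGaps, card_add, card_map]
  omega

theorem pairedGaps_nonneg (hRd : ∀ z ∈ R, ‖z‖ ≤ d) : ∀ x ∈ pairedGaps d R, 0 ≤ x := by
  have hre : ∀ z ∈ R, 0 ≤ d - z.re := fun z hz =>
    sub_nonneg.mpr ((Complex.re_le_norm z).trans (hRd z hz))
  simp only [pairedGaps, mem_add, mem_map, mem_filter]
  rintro x (⟨z, ⟨hz, -⟩, rfl⟩ | ⟨z, ⟨hz, -⟩, rfl⟩)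
  · exact hre z hz
  · exact mul_nonneg zero_le_two (hre z hz)

theorem norm_prod_ofReal_sub_le (hR : R.map conj = R) (hRd : ∀ z ∈ R, ‖z‖ ≤ d) :
    ‖(R.map ((d : ℂ) - ·)).prod‖ ≤ d ^ card (R.filter (0 < ·.im)) * (pairedGaps d R).prod := by
  set Rr := R.filter (·.im = 0)
  set Rp := R.filter (0 < ·.im)
  have hnorm : ‖(R.map ((d : ℂ) - ·)).prod‖ = (R.map (‖(d : ℂ) - ·‖)).prod := by
    rw [← normHom_apply, map_multiset_prod, map_map]
    rfl
  have hreal : (Rr.map (‖(d : ℂ) - ·‖)).prod = (Rr.map fun z => d - z.re).prod :=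
    congrArg prod <| map_congr rfl fun z hz =>
      Complex.norm_ofReal_sub_of_im_eq_zero (mem_filter.1 hz).2
        ((Complex.re_le_norm z).trans (hRd z (mem_filter.1 hz).1))
  have hpair : (Rp.map (‖(d : ℂ) - ·‖)).prod ^ 2 ≤
      d ^ card Rp * (Rp.map fun z => 2 * (d - z.re)).prod :=
    calc (Rp.map (‖(d : ℂ) - ·‖)).prod ^ 2 = (Rp.map (‖(d : ℂ) - ·‖ ^ 2)).prod :=
          prod_map_pow.symm
      _ ≤ (Rp.map fun z => d * (2 * (d - z.re))).prod :=
        prod_map_le_prod_map₀ _ _ (fun _ _ => sq_nonneg _) fun z hz =>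
          Complex.norm_ofReal_sub_sq_le (hRd z (mem_filter.1 hz).1)
      _ = d ^ card Rp * (Rp.map fun z => 2 * (d - z.re)).prod := by
        rw [prod_map_mul, map_const', prod_replicate]
  have hreal_nonneg : 0 ≤ (Rr.map fun z => d - z.re).prod :=
    prod_nonneg fun x hx => pairedGaps_nonneg hRd x (mem_add.2 (Or.inl hx))
  have hconj : (‖(d : ℂ) - ·‖) ∘ conj = (‖(d : ℂ) - ·‖) :=
    funext fun z => by simpa using Complex.norm_conj ((d : ℂ) - z)
  have hsplit : (R.map (‖(d : ℂ) - ·‖)).prod =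
      (Rr.map (‖(d : ℂ) - ·‖)).prod * (Rp.map (‖(d : ℂ) - ·‖)).prod ^ 2 := by
    conv_lhs => rw [← filter_im_eq_zero_add_filter_im_pos_add_map_conj hR]
    rw [map_add, map_add, map_map, hconj, prod_add, prod_add, sq, mul_assoc]
  rw [hnorm, hsplit, hreal, pairedGaps, prod_add]
  calc _ ≤ (Rr.map fun z => d - z.re).prod *
          (d ^ card Rp * (Rp.map fun z => 2 * (d - z.re)).prod) :=
        mul_le_mul_of_nonneg_left hpair hreal_nonneg
    _ = _ := by ring

theorem norm_prod_ofReal_sub_le_of_sum_le (hd : 0 ≤ d) (hR : R.map conj = R)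
    (hRd : ∀ z ∈ R, ‖z‖ ≤ d) {B : ℝ} (hB : (R.map fun z => d - z.re).sum ≤ B) :
    ‖(R.map ((d : ℂ) - ·)).prod‖ ≤ d ^ card (R.filter (0 < ·.im)) *
      (B / (card R - card (R.filter (0 < ·.im)) : ℕ)) ^ (card R - card (R.filter (0 < ·.im))) := by
  rw [← sum_pairedGaps hR] at hB
  rw [← card_pairedGaps hR]
  have hgaps := pairedGaps_nonneg hRd
  calc _ ≤ _ := norm_prod_ofReal_sub_le hR hRd
    _ ≤ _ := mul_le_mul_of_nonneg_left (prod_le_sum_div_card_pow hgaps) (pow_nonneg hd _)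
    _ ≤ _ := by gcongr; exact div_nonneg (sum_nonneg hgaps) (Nat.cast_nonneg _)

end Multiset

theorem Matrix.charpoly_roots_map_conj {n : Type*} [Fintype n] [DecidableEq n]
    {A : Matrix n n ℂ} (hA : A.map conj = A) : A.charpoly.roots.map conj = A.charpoly.roots := by
  rw [← (IsAlgClosed.splits A.charpoly).roots_map, ← Matrix.charpoly_map, hA]

theorem Matrix.re_trace_map_intCast_nonneg {n : Type*} [Fintype n] {M : Matrix n n ℤ}
    (hM : ∀ i, 0 ≤ M i i) : 0 ≤ (M.map ((↑) : ℤ → ℂ)).trace.re := by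
  rw [Matrix.trace, Complex.re_sum]
  exact Finset.sum_nonneg fun i _ => by simpa using hM i

theorem Matrix.sum_map_sub_re_le_of_charpoly_roots_eq_cons {n : Type*} [Fintype n]
    [DecidableEq n] {M : Matrix n n ℤ} (hM : ∀ i, 0 ≤ M i i) {d : ℝ} {R : Multiset ℂ}
    (hroots : (M.map ((↑) : ℤ → ℂ)).charpoly.roots = (d : ℂ) ::ₘ R) :
    (R.map fun z => d - z.re).sum ≤ (Multiset.card R + 1) * d := by
  have htrace := Matrix.re_trace_map_intCast_nonneg hM
  have hre : R.sum.re = (R.map Complex.re).sum := map_multiset_sum Complex.reAddGroupHom R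
  rw [Matrix.trace_eq_sum_roots_charpoly, hroots, Multiset.sum_cons, Complex.add_re,
    Complex.ofReal_re, hre] at htrace
  rw [Multiset.sum_map_sub, Multiset.map_const', Multiset.sum_replicate, nsmul_eq_mul]
  linarith

theorem rpow_one_div_mul_rpow_le_of_le_pow_mul_div_pow {N d : ℝ} {r s m : ℕ} (hN : 0 ≤ N)
    (hd : 0 ≤ d) (hr : 2 ≤ r) (hrsm : s + m + 1 = r) (h : N ≤ d ^ s * (r * d / m) ^ m) :
    N ^ ((1 : ℝ) / ((r : ℝ) - 1)) * (1 - ((s : ℝ) + 1) / r) ^ (1 - (s : ℝ) / ((r : ℝ) - 1))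
      ≤ d := by
  have hsm : (r : ℝ) - 1 = (s + m : ℕ) := by rw [← hrsm]; push_cast; ring
  have hbase : 1 - ((s : ℝ) + 1) / r = m / r := by
    rw [← hrsm]; field_simp; push_cast; ring
  have hexp : 1 - (s : ℝ) / ((r : ℝ) - 1) = m * (1 / ((r : ℝ) - 1)) := by
    have hsm0 : ((s + m : ℕ) : ℝ) ≠ 0 := Nat.cast_ne_zero.mpr (by omega)
    rw [hsm]; field_simp; push_cast; ring
  have hkey : N * ((m : ℝ) / r) ^ m ≤ d ^ (s + m) := by
    have hcancel : (r * d / m) ^ m * ((m : ℝ) / r) ^ m = d ^ m := by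
      rcases eq_or_ne m 0 with rfl | hm
      · simp
      · rw [← mul_pow]; congr 1; field_simp
    calc N * ((m : ℝ) / r) ^ m ≤ d ^ s * (r * d / m) ^ m * ((m : ℝ) / r) ^ m := by gcongr
      _ = d ^ (s + m) := by rw [mul_assoc, hcancel, pow_add]
  rw [hbase, hexp, Real.rpow_mul (by positivity), Real.rpow_natCast,
    ← Real.mul_rpow hN (by positivity), hsm, one_div]
  calc _ ≤ (d ^ (s + m)) ^ ((s + m : ℕ) : ℝ)⁻¹ :=
        Real.rpow_le_rpow (by positivity) hkey (by positivity)
    _ = d := Real.pow_rpow_inv_natCast hd (by omega)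

theorem stmt2_general (r : ℕ) (hr : 2 ≤ r) (M : Matrix (Fin r) (Fin r) ℤ)
    (hM : ∀ i j, 0 ≤ M i j) (d N : ℝ) (hd : 0 < d) (hN : 0 < N)
    (Q : Polynomial ℂ)
    (hfac : (M.map ((↑) : ℤ → ℂ)).charpoly = (X - C (d : ℂ)) * Q)
    (hmax : ∀ z ∈ (M.map ((↑) : ℤ → ℂ)).charpoly.roots, ‖z‖ ≤ d)
    (hQN : N ≤ (Q.eval (d : ℂ)).re)
    (s : ℕ)
    (hs : s = Multiset.card
      ((M.map ((↑) : ℤ → ℂ)).charpoly.roots.filter (fun z => 0 < z.im))) :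
    N ^ ((1 : ℝ) / ((r : ℝ) - 1)) * (1 - ((s : ℝ) + 1) / r) ^ (1 - (s : ℝ) / ((r : ℝ) - 1))
      ≤ d := by
  set A := M.map ((↑) : ℤ → ℂ)
  set R := Q.roots
  have hQ : Q.Monic := (monic_X_sub_C (d : ℂ)).of_mul_monic_left (hfac ▸ A.charpoly_monic)
  have hroots : A.charpoly.roots = (d : ℂ) ::ₘ R := by
    rw [hfac, roots_mul (hfac ▸ A.charpoly_monic.ne_zero), roots_X_sub_C, Multiset.singleton_add]
  have hcard : Multiset.card R + 1 = r := by
    rw [← Multiset.card_cons, ← hroots, splits_iff_card_roots.mp (IsAlgClosed.splits _),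
      A.charpoly_natDegree_eq_dim, Fintype.card_fin]
  have hR : R.map conj = R := by
    have := Matrix.charpoly_roots_map_conj (A := A) (by ext; simp [A])
    rwa [hroots, Multiset.map_cons, Complex.conj_ofReal, Multiset.cons_inj_right] at this
  have hRd : ∀ z ∈ R, ‖z‖ ≤ d := fun z hz => hmax z (hroots ▸ Multiset.mem_cons_of_mem hz)
  have hsR : s = Multiset.card (R.filter (0 < ·.im)) := by simp [hs, hroots]
  have hsum := Matrix.sum_map_sub_re_le_of_charpoly_roots_eq_cons (fun i => hM i i) hroots
  rw [← Nat.cast_add_one, hcard] at hsum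
  have hbound := Multiset.norm_prod_ofReal_sub_le_of_sum_le hd.le hR hRd hsum
  rw [← hsR, ← (IsAlgClosed.splits Q).eval_eq_prod_roots_of_monic hQ] at hbound
  refine rpow_one_div_mul_rpow_le_of_le_pow_mul_div_pow hN.le hd.le hr (m := Multiset.card R - s)
    (by have := hsR ▸ Multiset.card_le_card (Multiset.filter_le (0 < ·.im : ℂ → Prop) R); omega)
    (hQN.trans ((Complex.re_le_norm _).trans hbound))

/-- Analytic core of the lower bound for the FP-dimension of a `ℤ₊`-generator:
if `M` is an `r × r` nonnegative integer matrix whose characteristic polynomial factors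
as `(X - d) * Q` with `d > 0` a simple root dominating all eigenvalues in absolute value,
`Q(d) ≥ N > 0`, and `s` is the number of eigenvalues with positive imaginary part
(with multiplicity), then `d ≥ N^(1/(r-1)) * (1 - (s+1)/r)^(1 - s/(r-1))`. -/
theorem stmt2 (r : ℕ) (hr : 2 ≤ r) (M : Matrix (Fin r) (Fin r) ℤ)
    (hM : ∀ i j, 0 ≤ M i j) (d N : ℝ) (hd : 0 < d) (hN : 0 < N)
    (Q : Polynomial ℂ)
    (hfac : (M.map ((↑) : ℤ → ℂ)).charpoly = (X - C (d : ℂ)) * Q)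
    (hsimple : Q.eval (d : ℂ) ≠ 0)
    (hmax : ∀ z ∈ (M.map ((↑) : ℤ → ℂ)).charpoly.roots, ‖z‖ ≤ d)
    (hQN : N ≤ (Q.eval (d : ℂ)).re)
    (s : ℕ)
    (hs : s = Multiset.card
      ((M.map ((↑) : ℤ → ℂ)).charpoly.roots.filter (fun z => 0 < z.im))) :
    N ^ ((1 : ℝ) / ((r : ℝ) - 1)) * (1 - ((s : ℝ) + 1) / r) ^ (1 - (s : ℝ) / ((r : ℝ) - 1))
      ≤ d :=
  stmt2_general r hr M hM d N hd hN Q hfac hmax hQN s hs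
end

section
/- Suppose $q$ is a prime, and $r \ge s \ge 0$ are integers with $p n = q^{r+s}(q^{r-s} + 1)$, where $p$ is a prime and $n$ is a positive integer with $p > n$. Then $s = 0$, $n = q^r$, $p = q^r + 1$, $q = 2$, and $r$ is a power of $2$ (i.e., $p$ is a Fermat prime), unless $r = 0$ (in which case $pn = 2$). -/
/-!
Since `s ≤ r`, the right-hand side exceeds `q^(r+s) * q^(r-s) = (q^r)^2`, so `n < p` forces
`q^r < p`. In particular `p ≠ q`, hence `p ∣ q^(r-s) + 1 ≤ q^r + 1`, which pins down `s = 0`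
and `p = q^r + 1`. A prime of the form `q^r + 1` with `q^r > 1` is odd, so `q = 2`, and
then `r` is a power of two as for any Fermat prime.
-/

namespace Nat

theorem even_of_pow_add_one_prime {a k : ℕ} (ha : a ≠ 1) (hk : k ≠ 0) (hP : (a ^ k + 1).Prime) :
    Even a := by
  by_contra hodd
  have h2 : a ^ k + 1 = 2 := hP.even_iff.mp (not_even_iff_odd.mp hodd).pow.add_one
  exact ha ((Nat.pow_eq_one.mp (by omega)).resolve_right hk)

theorem pow_mul_self_lt_pow_add_mul_pow_sub_add_one {q r s : ℕ} (hq : 0 < q) (hsr : s ≤ r) :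
    q ^ r * q ^ r < q ^ (r + s) * (q ^ (r - s) + 1) := by
  have hsplit : q ^ r * q ^ r = q ^ (r + s) * q ^ (r - s) := by
    rw [← pow_add, ← pow_add]; congr 1; omega
  rw [hsplit, mul_add_one]
  exact Nat.lt_add_of_pos_right (pow_pos hq _)

theorem lt_of_mul_self_lt_mul_of_lt {a p n : ℕ} (h : a * a < p * n) (hnp : n < p) : a < p :=
  Nat.mul_self_lt_mul_self_iff.mp (h.trans (Nat.mul_lt_mul_of_pos_left hnp (by omega)))

theorem Prime.eq_pow_add_one_of_mul_eq {q p n r s : ℕ} (hq : q.Prime) (hp : p.Prime)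
    (hnp : n < p) (hr : r ≠ 0) (hsr : s ≤ r) (heq : p * n = q ^ (r + s) * (q ^ (r - s) + 1)) :
    s = 0 ∧ p = q ^ r + 1 := by
  have hqr : q ^ r < p :=
    lt_of_mul_self_lt_mul_of_lt (heq ▸ pow_mul_self_lt_pow_add_mul_pow_sub_add_one hq.pos hsr) hnp
  have hpq : p ≠ q := (lt_of_le_of_lt (Nat.le_self_pow hr q) hqr).ne'
  have hdvd : p ∣ q ^ (r - s) + 1 := by
    refine (hp.dvd_mul.mp (Dvd.intro n heq)).resolve_left fun h ↦ hpq ?_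
    exact (prime_dvd_prime_iff_eq hp hq).mp (hp.dvd_of_dvd_pow h)
  have hle : q ^ (r - s) ≤ q ^ r := Nat.pow_le_pow_right hq.pos (by omega)
  have hpow : q ^ (r - s) + 1 = p :=
    le_antisymm (by omega) (Nat.le_of_dvd (by positivity) hdvd)
  have hsub : r - s = r := Nat.pow_right_injective hq.two_le (show q ^ (r - s) = q ^ r by omega)
  exact ⟨by omega, by rw [← hpow, hsub]⟩

end Nat

theorem stmt7_general (q p n r s : ℕ) (hq : q.Prime) (hp : p.Prime) (hpn : n < p)
    (hrs : s ≤ r) (heq : p * n = q ^ (r + s) * (q ^ (r - s) + 1)) :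
    (r = 0 ∧ p * n = 2) ∨
      (s = 0 ∧ n = q ^ r ∧ p = q ^ r + 1 ∧ q = 2 ∧ ∃ m, r = 2 ^ m) := by
  rcases eq_or_ne r 0 with rfl | hr
  · obtain rfl : s = 0 := Nat.le_zero.mp hrs
    exact Or.inl ⟨rfl, heq⟩
  obtain ⟨rfl, hpval⟩ := Nat.Prime.eq_pow_add_one_of_mul_eq hq hp hpn hr hrs heq
  have hnval : n = q ^ r := by
    refine Nat.eq_of_mul_eq_mul_left hp.pos ?_
    rw [heq, hpval, Nat.add_zero, Nat.sub_zero, mul_comm]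
  have hq2 : q = 2 :=
    hq.even_iff.mp (Nat.even_of_pow_add_one_prime hq.one_lt.ne' hr (hpval ▸ hp))
  subst hq2
  exact Or.inr ⟨rfl, hnval, hpval, rfl, Nat.pow_of_pow_add_prime one_lt_two hr (hpval ▸ hp)⟩

/-- If `p * n = q^(r+s) * (q^(r-s) + 1)` with `q, p` prime, `p > n ≥ 1`, `r ≥ s ≥ 0`,
then either `r = 0` and `p * n = 2`, or `s = 0`, `n = q^r`, `p = q^r + 1` is a Fermat
prime (`q = 2` and `r` a power of `2`). -/
theorem stmt7 (q p n r s : ℕ) (hq : q.Prime) (hp : p.Prime) (hn : 0 < n) (hpn : n < p)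
    (hrs : s ≤ r) (heq : p * n = q ^ (r + s) * (q ^ (r - s) + 1)) :
    (r = 0 ∧ p * n = 2) ∨
      (s = 0 ∧ n = q ^ r ∧ p = q ^ r + 1 ∧ q = 2 ∧ ∃ m, r = 2 ^ m) :=
  stmt7_general q p n r s hq hp hpn hrs heq
end

section
/- The only pairs of consecutive prime powers $(m, m+1)$ with $m \ge 2$ are: $(q-1, q)$ where $q$ is a Fermat prime and $q - 1$ is a power of 2; $(p, p+1)$ where $p$ is a Mersenne prime and $p+1$ is a power of 2; and $(8, 9)$. Equivalently: if $m$ and $m+1$ are both prime powers with $m \ge 2$, then either $m+1$ is a Fermat prime and $m$ a power of 2, or $m$ is a Mersenne prime and $m+1$ a power of 2, or $(m, m+1) = (8,9)$. -/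
open Finset

/-- An odd divisor of a power of two equals one. -/
lemma odd_dvd_two_pow {t n : ℕ} (ht : Odd t) (hd : t ∣ 2 ^ n) : t = 1 := by
  have h2 : ¬ 2 ∣ t := by have := Nat.odd_iff.mp ht; omega
  have hc : Nat.Coprime t 2 :=
    Nat.coprime_comm.mp ((Nat.Prime.coprime_iff_not_dvd Nat.prime_two).mpr h2)
  exact Nat.Coprime.eq_one_of_dvd (hc.pow_right n) hd

lemma zmod2_one_iff_odd (t : ℕ) : (t : ZMod 2) = 1 ↔ Odd t := by
  rw [← ZMod.natCast_mod t 2, Nat.odd_iff]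
  rcases Nat.mod_two_eq_zero_or_one t with h | h <;> rw [h]
  · simp
  · simp

/-- If `ℓ ≥ 3` is odd, `k` is odd, and `ℓ^k = 2^n + 1`, then `k = 1`. -/
lemma aux_sub (ℓ k n : ℕ) (hℓ : Odd ℓ) (hℓ2 : 2 ≤ ℓ) (hk : Odd k)
    (h : ℓ ^ k = 2 ^ n + 1) : k = 1 := by
  have hk1 : 1 ≤ k := hk.pos
  obtain ⟨t, ht⟩ : ℓ - 1 ∣ ℓ ^ k - 1 := by simpa using Nat.sub_dvd_pow_sub_pow ℓ 1 k
  have hℓk : 1 ≤ ℓ ^ k := Nat.one_le_pow _ _ (by omega)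
  have hgeom : (∑ i ∈ range k, (ℓ : ℤ) ^ i) * ((ℓ : ℤ) - 1) = (ℓ : ℤ) ^ k - 1 :=
    geom_sum_mul _ _
  have hcast : ((ℓ : ℤ) - 1) * (t : ℤ) = (ℓ : ℤ) ^ k - 1 := by
    have h1 : ((ℓ ^ k - 1 : ℕ) : ℤ) = (((ℓ - 1) * t : ℕ) : ℤ) := by rw [ht]
    rw [Nat.cast_sub hℓk, Nat.cast_mul, Nat.cast_sub (by omega : 1 ≤ ℓ)] at h1
    push_cast at h1 ⊢
    linarith
  have hne : (ℓ : ℤ) - 1 ≠ 0 := by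
    have : (2 : ℤ) ≤ (ℓ : ℤ) := by exact_mod_cast hℓ2
    omega
  have hst : (∑ i ∈ range k, (ℓ : ℤ) ^ i) = (t : ℤ) := by
    apply mul_right_cancel₀ hne
    linear_combination hgeom - hcast
  have htodd : Odd t := by
    rw [← zmod2_one_iff_odd]
    have hmap := congrArg (fun z : ℤ => (z : ZMod 2)) hst
    push_cast at hmap
    have hl2 : (ℓ : ZMod 2) = 1 := (zmod2_one_iff_odd ℓ).mpr hℓ
    rw [hl2] at hmap
    simp only [one_pow, Finset.sum_const, Finset.card_range, nsmul_eq_mul, mul_one] at hmap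
    rw [← hmap]
    exact (zmod2_one_iff_odd k).mpr hk
  have htd : t ∣ 2 ^ n := by
    refine ⟨ℓ - 1, ?_⟩
    have h2 : ℓ ^ k - 1 = 2 ^ n := by omega
    rw [← h2, ht]; ring
  have ht1 : t = 1 := odd_dvd_two_pow htodd htd
  subst ht1
  have hfin : ℓ ^ k = ℓ := by omega
  exact (Nat.pow_eq_self_iff (by omega)).mp hfin

/-- If `ℓ ≥ 3` is odd, `k` is odd, and `ℓ^k + 1 = 2^n`, then `k = 1`. -/
lemma aux_add (ℓ k n : ℕ) (hℓ : Odd ℓ) (hℓ2 : 2 ≤ ℓ) (hk : Odd k)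
    (h : ℓ ^ k + 1 = 2 ^ n) : k = 1 := by
  have hk1 : 1 ≤ k := hk.pos
  obtain ⟨t, ht⟩ : ℓ + 1 ∣ ℓ ^ k + 1 := by simpa using hk.nat_add_dvd_pow_add_pow ℓ 1
  have hgeom : (∑ i ∈ range k, (ℓ : ℤ) ^ i * (-1 : ℤ) ^ (k - 1 - i)) * ((ℓ : ℤ) - (-1)) =
      (ℓ : ℤ) ^ k - (-1) ^ k := geom_sum₂_mul _ _ _
  rw [hk.neg_one_pow] at hgeom
  have hcast : ((ℓ : ℤ) + 1) * (t : ℤ) = (ℓ : ℤ) ^ k + 1 := by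
    have h1 : ((ℓ ^ k + 1 : ℕ) : ℤ) = (((ℓ + 1) * t : ℕ) : ℤ) := by rw [ht]
    push_cast at h1 ⊢
    linarith
  have hne : (ℓ : ℤ) + 1 ≠ 0 := by positivity
  have hst : (∑ i ∈ range k, (ℓ : ℤ) ^ i * (-1 : ℤ) ^ (k - 1 - i)) = (t : ℤ) := by
    apply mul_right_cancel₀ hne
    linear_combination hgeom - hcast
  have htodd : Odd t := by
    rw [← zmod2_one_iff_odd]
    have hmap := congrArg (fun z : ℤ => (z : ZMod 2)) hst
    push_cast at hmap
    have hl2 : (ℓ : ZMod 2) = 1 := (zmod2_one_iff_odd ℓ).mpr hℓ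
    have hneg : (-1 : ZMod 2) = 1 := by decide
    rw [hl2, hneg] at hmap
    simp only [one_pow, mul_one, Finset.sum_const, Finset.card_range, nsmul_eq_mul] at hmap
    rw [← hmap]
    exact (zmod2_one_iff_odd k).mpr hk
  have htd : t ∣ 2 ^ n := ⟨ℓ + 1, by rw [← h, ht]; ring⟩
  have ht1 : t = 1 := odd_dvd_two_pow htodd htd
  subst ht1
  have hfin : ℓ ^ k = ℓ := by omega
  exact (Nat.pow_eq_self_iff (by omega)).mp hfin

/-- Odd `u ≥ 3` with `u^2 = 2^n + 1` forces `u = 3` and `n = 3`. -/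
lemma aux_sq (u n : ℕ) (hu : Odd u) (hu3 : 3 ≤ u) (h : u * u = 2 ^ n + 1) :
    u = 3 ∧ n = 3 := by
  obtain ⟨w, rfl⟩ := hu
  have hw1 : 1 ≤ w := by omega
  have hid : (2 * w + 1) * (2 * w + 1) = 4 * (w * (w + 1)) + 1 := by ring
  rw [hid] at h
  have hA : 2 ≤ w * (w + 1) := by nlinarith
  have hn3 : 3 ≤ n := by
    by_contra hc
    interval_cases n <;> omega
  have hpow : 2 ^ n = 4 * 2 ^ (n - 2) := by
    have h22 : 2 ^ (n - 2) * 2 ^ 2 = 2 ^ n := by rw [← pow_add]; congr 1; omega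
    omega
  have hAX : w * (w + 1) = 2 ^ (n - 2) := by omega
  rcases Nat.even_or_odd w with he | ho
  · have hodd : Odd (w + 1) := Even.add_one he
    have hdvd : (w + 1) ∣ 2 ^ (n - 2) := ⟨w, by rw [← hAX]; ring⟩
    have := odd_dvd_two_pow hodd hdvd
    omega
  · have hdvd : w ∣ 2 ^ (n - 2) := ⟨w + 1, hAX.symm⟩
    have hw : w = 1 := odd_dvd_two_pow ho hdvd
    subst hw
    have : 2 ^ n = 2 ^ 3 := by omega
    have := Nat.pow_right_injective (le_refl 2) this
    omega

/-- Consecutive prime powers: if `m ≥ 2` and both `m` and `m+1` are prime powers, then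
either `m+1` is a Fermat prime and `m = 2^(2^a)`, or `m` is a Mersenne prime and
`m+1 = 2^b`, or `(m, m+1) = (8, 9)`. -/
theorem stmt8 (m : ℕ) (hm : 2 ≤ m) (h1 : IsPrimePow m) (h2 : IsPrimePow (m + 1)) :
    ((∃ a, m = 2 ^ 2 ^ a) ∧ (m + 1).Prime) ∨
      (m.Prime ∧ ∃ b, m + 1 = 2 ^ b) ∨ (m = 8 ∧ m + 1 = 9) := by
  obtain ⟨p, k, hp, hkpos, hpk⟩ := (isPrimePow_nat_iff m).mp h1
  obtain ⟨q, l, hq, hlpos, hql⟩ := (isPrimePow_nat_iff (m + 1)).mp h2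
  rcases Nat.even_or_odd m with hme | hmo
  · -- m even, so m = 2^k
    have hp2 : p = 2 := by
      have hdvd : 2 ∣ p ^ k := hpk ▸ hme.two_dvd
      have := Nat.Prime.dvd_of_dvd_pow (p := 2) Nat.prime_two hdvd
      exact ((Nat.prime_dvd_prime_iff_eq Nat.prime_two hp).mp this).symm
    subst hp2
    -- q is odd
    have hq2 : q ≠ 2 := by
      intro hq2
      subst hq2
      have : 2 ∣ m + 1 := hql ▸ dvd_pow_self 2 (by omega)
      rcases hme with ⟨r, rfl⟩
      omega
    have hqodd : Odd q := hq.odd_of_ne_two hq2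
    have hq3 : 3 ≤ q := by have := hq.two_le; omega
    have heq : q ^ l = 2 ^ k + 1 := by rw [hql, hpk]
    rcases Nat.even_or_odd l with hle | hlo
    · -- l even: the (8,9) case
      obtain ⟨j, rfl⟩ := hle
      have hj1 : 1 ≤ j := by omega
      have huodd : Odd (q ^ j) := hqodd.pow
      have hu3 : 3 ≤ q ^ j := le_trans hq3 (Nat.le_self_pow (by omega) q)
      have hsq : (q ^ j) * (q ^ j) = 2 ^ k + 1 := by
        rw [← heq, ← pow_add]
      obtain ⟨hu, hk3⟩ := aux_sq (q ^ j) k huodd hu3 hsq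
      have hm8 : m = 8 := by rw [← hpk, hk3]; norm_num
      exact Or.inr (Or.inr ⟨hm8, by omega⟩)
    · -- l odd: l = 1, m+1 prime, Fermat case
      have hl1 : l = 1 := aux_sub q l k hqodd hq.two_le hlo heq
      subst hl1
      rw [pow_one] at hql
      have hkne : k ≠ 0 := by omega
      have hP : (2 ^ k + 1).Prime := by rw [← heq, pow_one]; exact hq
      obtain ⟨a, ha⟩ := Nat.pow_of_pow_add_prime one_lt_two hkne hP
      left
      exact ⟨⟨a, by rw [← hpk, ha]⟩, hql ▸ hq⟩
  · -- m odd, so m+1 = 2^l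
    have hq2 : q = 2 := by
      have hme : Even (m + 1) := Odd.add_one hmo
      have hdvd : 2 ∣ q ^ l := hql ▸ hme.two_dvd
      have := Nat.Prime.dvd_of_dvd_pow (p := 2) Nat.prime_two hdvd
      exact ((Nat.prime_dvd_prime_iff_eq Nat.prime_two hq).mp this).symm
    subst hq2
    have hp2 : p ≠ 2 := by
      intro hp2
      subst hp2
      have : 2 ∣ m := hpk ▸ dvd_pow_self 2 (by omega)
      rcases hmo with ⟨r, rfl⟩
      omega
    have hpodd : Odd p := hp.odd_of_ne_two hp2
    have hp3 : 3 ≤ p := by have := hp.two_le; omega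
    have heq : p ^ k + 1 = 2 ^ l := by rw [hpk, hql]
    rcases Nat.even_or_odd k with hke | hko
    · -- k even: impossible
      exfalso
      obtain ⟨j, rfl⟩ := hke
      have hj1 : 1 ≤ j := by omega
      have huodd : Odd (p ^ j) := hpodd.pow
      have hu3 : 3 ≤ p ^ j := le_trans hp3 (Nat.le_self_pow (by omega) p)
      have hsq : (p ^ j) * (p ^ j) + 1 = 2 ^ l := by
        rw [← heq, ← pow_add]
      obtain ⟨w, hw⟩ := huodd
      have hid : (2 * w + 1) * (2 * w + 1) + 1 = 4 * (w * (w + 1)) + 2 := by ring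
      rw [hw, hid] at hsq
      have hl2 : 2 ≤ l := by
        by_contra hc
        interval_cases l <;> omega
      have hpow : 2 ^ l = 4 * 2 ^ (l - 2) := by
        have h22 : 2 ^ (l - 2) * 2 ^ 2 = 2 ^ l := by rw [← pow_add]; congr 1; omega
        omega
      omega
    · -- k odd: k = 1, m prime, Mersenne case
      have hk1 : k = 1 := aux_add p k l hpodd hp.two_le hko heq
      subst hk1
      rw [pow_one] at hpk
      exact Or.inr (Or.inl ⟨hpk ▸ hp, ⟨l, hql.symm⟩⟩)
end

section
/- Let $d > 2$ be an integer and let $a_1, \dots, a_d$ be nonzero elements of a field such that at most $d$ of the $d^2$ products $a_i a_j$ ($1 \le i, j \le d$) are different from $1$. Then either $a_i = 1$ for all $i$, or $a_i = -1$ for all $i$. -/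
/-- If `d > 2` and `a₁, …, a_d` are nonzero field elements such that at most `d` of the
`d²` products `aᵢaⱼ` differ from `1`, then all `aᵢ = 1` or all `aᵢ = -1`. -/
theorem stmt10 {F : Type} [Field F] [DecidableEq F] (d : ℕ) (hd : 2 < d)
    (a : Fin d → F) (ha : ∀ i, a i ≠ 0)
    (hcard : (Finset.univ.filter (fun x : Fin d × Fin d => a x.1 * a x.2 ≠ 1)).card ≤ d) :
    (∀ i, a i = 1) ∨ (∀ i, a i = -1) := by
  classical
  set B := Finset.univ.filter (fun x : Fin d × Fin d => a x.1 * a x.2 ≠ 1) with hB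
  -- subsets of B have card ≤ d
  have hsub : ∀ T : Finset (Fin d × Fin d), T ⊆ B → T.card ≤ d := fun T hT =>
    le_trans (Finset.card_le_card hT) hcard
  -- fiberwise decomposition
  have hfib : B.card = ∑ i : Fin d, (B.filter (fun x => x.1 = i)).card :=
    Finset.card_eq_sum_card_fiberwise (fun x _ => Finset.mem_univ x.1)
  have hrow : ∀ i : Fin d, (B.filter (fun x => x.1 = i)).card
      = (Finset.univ.filter (fun j => a i * a j ≠ 1)).card := by
    intro i
    have himg : B.filter (fun x => x.1 = i)
        = (Finset.univ.filter (fun j => a i * a j ≠ 1)).image (fun j => (i, j)) := by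
      ext x
      simp only [hB, Finset.mem_filter, Finset.mem_univ, true_and, Finset.mem_image]
      constructor
      · rintro ⟨hx, rfl⟩
        exact ⟨x.2, hx, rfl⟩
      · rintro ⟨j, hj, rfl⟩
        exact ⟨hj, rfl⟩
    rw [himg, Finset.card_image_of_injective _ (fun x y h => (Prod.mk.injEq _ _ _ _).mp h |>.2)]
  -- there is a row with at most 1 bad entry
  obtain ⟨i, hi⟩ : ∃ i : Fin d, (Finset.univ.filter (fun j => a i * a j ≠ 1)).card ≤ 1 := by
    by_contra h
    push_neg at h
    have : d * 2 ≤ B.card := by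
      rw [hfib]
      calc d * 2 = ∑ _i : Fin d, 2 := by simp [mul_comm]
        _ ≤ _ := Finset.sum_le_sum (fun i _ => by rw [hrow i]; exact h i)
    have := hsub B (le_refl B)
    omega
  set c := (a i)⁻¹ with hc
  set S := Finset.univ.filter (fun j => a j = c) with hS
  have hScard : d - 1 ≤ S.card := by
    have : Finset.univ.filter (fun j => ¬ (a i * a j ≠ 1)) ⊆ S := by
      intro j hj
      simp only [Finset.mem_filter, Finset.mem_univ, true_and, not_not] at hj
      simp only [hS, Finset.mem_filter, Finset.mem_univ, true_and, hc]
      exact eq_inv_of_mul_eq_one_right hj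
    have hcomp := Finset.card_filter_add_card_filter_not
      (s := (Finset.univ : Finset (Fin d))) (p := fun j => a i * a j ≠ 1)
    have := Finset.card_le_card this
    simp only [Finset.card_univ, Fintype.card_fin] at hcomp
    omega
  have hc2 : c * c = 1 := by
    by_contra hcc
    have hSS : S ×ˢ S ⊆ B := by
      rintro ⟨x, y⟩ hxy
      simp only [Finset.mem_product, hS, Finset.mem_filter, Finset.mem_univ, true_and] at hxy
      simp only [hB, Finset.mem_filter, Finset.mem_univ, true_and]
      rw [hxy.1, hxy.2]; exact hcc
    have := hsub _ hSS
    rw [Finset.card_product] at this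
    have hs : d ≤ S.card + 1 := by omega
    have hs2 : 2 ≤ S.card := by omega
    nlinarith
  have hall : ∀ j, a j = c := by
    intro j
    by_contra hj
    have hjS : j ∉ S := by simp [hS, hj]
    have h1 : ({j} ×ˢ S) ⊆ B := by
      rintro ⟨x, y⟩ hxy
      simp only [Finset.mem_product, Finset.mem_singleton, hS, Finset.mem_filter,
        Finset.mem_univ, true_and] at hxy
      simp only [hB, Finset.mem_filter, Finset.mem_univ, true_and]
      rw [hxy.1, hxy.2]
      intro h
      apply hj
      have h' : a j = c⁻¹ := eq_inv_of_mul_eq_one_left h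
      rw [h', inv_eq_of_mul_eq_one_right hc2]
    have h2 : (S ×ˢ {j}) ⊆ B := by
      rintro ⟨x, y⟩ hxy
      simp only [Finset.mem_product, Finset.mem_singleton, hS, Finset.mem_filter,
        Finset.mem_univ, true_and] at hxy
      simp only [hB, Finset.mem_filter, Finset.mem_univ, true_and]
      rw [hxy.1, hxy.2]
      intro h
      apply hj
      have h' : a j = c⁻¹ := eq_inv_of_mul_eq_one_right h
      rw [h', inv_eq_of_mul_eq_one_right hc2]
    have hdisj : Disjoint ({j} ×ˢ S) (S ×ˢ {j}) := by
      rw [Finset.disjoint_left]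
      rintro ⟨x, y⟩ hxy hxy'
      simp only [Finset.mem_product, Finset.mem_singleton] at hxy hxy'
      exact hjS (hxy.1 ▸ hxy'.1)
    have hU : ({j} ×ˢ S) ∪ (S ×ˢ {j}) ⊆ B := Finset.union_subset h1 h2
    have := hsub _ hU
    rw [Finset.card_union_of_disjoint hdisj, Finset.card_product, Finset.card_product] at this
    simp only [Finset.card_singleton] at this
    omega
  rcases mul_self_eq_one_iff.mp hc2 with h1 | h1
  · left; intro j; rw [hall j, h1]
  · right; intro j; rw [hall j, h1]
end

section
/- There are no integers $d, m \ge 2$, $a \ge 0$, $b \ge 1$, $s \ge 1$, $t \ge 1$ with $d^2 = 1 + a d + b m$ and $d m = s d + t m$. -/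
/-- There are no integers `d, m ≥ 2`, `a ≥ 0`, `b ≥ 1`, `s ≥ 1`, `t ≥ 1` with
`d² = 1 + ad + bm` and `dm = sd + tm`. -/
theorem stmt11 (d m a b s t : ℤ) (hd : 2 ≤ d) (hm : 2 ≤ m) (ha : 0 ≤ a)
    (hb : 1 ≤ b) (hs : 1 ≤ s) (ht : 1 ≤ t)
    (h1 : d ^ 2 = 1 + a * d + b * m) (h2 : d * m = s * d + t * m) : False := by
  -- gcd(d,m) = 1
  have hcop : IsCoprime d m := by
    have h1' : (1 : ℤ) = (d - a) * d + (-b) * m := by ring_nf; linarith [h1]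
    exact ⟨d - a, -b, h1'.symm⟩
  -- s*d = (d - t)*m
  have key : s * d = (d - t) * m := by ring_nf; linarith [h2]
  have hdpos : (0 : ℤ) < d := by linarith
  have hdt : 0 < d - t := by
    by_contra h
    push_neg at h
    nlinarith
  have hdvd : d ∣ (d - t) * m := ⟨s, by linarith [key]⟩
  have hdvd' : d ∣ d - t := hcop.dvd_of_dvd_mul_right hdvd
  have := Int.le_of_dvd hdt hdvd'
  linarith
end
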